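/- Let (X_i, X̊_i, ξ_i)_{i∈I} be a family of vector spaces with specified vectors, (X, X̊, ξ) their reduced free product, and φ_ξ the associated functional on L(X). Set A_{i,ℓ} = λ_i(L(X_i)) and A_{i,c} = P_i λ_i(L(X_i)) P_i. Let z₁ ∈ A_{i,c} and z₂ ∈ A_{j,c} for some i, j ∈ I. Then there exist T₁ ∈ A_{i,ℓ} and T₂ ∈ A_{j,ℓ} such that φ_ξ(z₁ z z₂) = φ_ξ(T₁ z T₂) for all z ∈ L(X); moreover T₁ and T₂ are uniquely determined by z₁ and z₂ respectively. -/

import Mathlib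

open scoped TensorProduct DirectSum

noncomputable section

namespace FFB

/-- A bundled complex vector space (used to form tensor products of the subspaces
`X̊_{i₁} ⊗ ⋯ ⊗ X̊_{iₙ}` by recursion). -/
structure VS : Type 1 where
  carrier : Type
  [grp : AddCommGroup carrier]
  [mod : Module ℂ carrier]

attribute [instance] VS.grp VS.mod

instance : CoeSort VS Type := ⟨VS.carrier⟩

/-- Bundle a complex vector space. -/
def VS.of (X : Type) [AddCommGroup X] [Module ℂ X] : VS := ⟨X⟩

variable {I : Type} [DecidableEq I]

/-- The tensor word `M i ⊗ M j₁ ⊗ ⋯ ⊗ M jₖ` for the word `i :: [j₁,…,jₖ]`. -/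
def TW (M : I → VS) : I → List I → VS
  | i, [] => M i
  | i, j :: w => VS.of ((M i : Type) ⊗[ℂ] (TW M j w : Type))

/-- Alternating words: nonempty words `i₁ i₂ ⋯ iₙ` with `i₁ ≠ i₂ ≠ ⋯ ≠ iₙ`, encoded as a
head together with a tail. -/
abbrev AW (I : Type) : Type := {p : I × List I // List.Chain' (· ≠ ·) (p.1 :: p.2)}

/-- The summand `X̊_{i₁} ⊗ ⋯ ⊗ X̊_{iₙ}` of the reduced free product associated to an
alternating word. -/
def WSp (M : I → VS) (p : AW I) : VS := TW M p.1.1 p.1.2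

/-- `X̊`, the reduced free product of the subspaces:
`X̊ = ⊕_{n≥1} ⊕_{i₁≠i₂≠⋯≠iₙ} X̊_{i₁} ⊗ ⋯ ⊗ X̊_{iₙ}`. -/
abbrev FPo (M : I → VS) : Type := ⨁ p : AW I, (WSp M p : Type)

/-- The reduced free product `X = ℂξ ⊕ X̊`. -/
abbrev FPr (M : I → VS) : Type := ℂ × FPo M

/-- The specified vector `ξ` of the reduced free product. -/
def xiFP (M : I → VS) : FPr M := (1, 0)

/-- Alternating words not starting with `i`. -/
abbrev AWl (I : Type) (i : I) : Type := {p : AW I // p.1.1 ≠ i}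

/-- Alternating words not ending with `i`. -/
abbrev AWr (I : Type) (i : I) : Type :=
  {p : AW I // (p.1.1 :: p.1.2).getLast (List.cons_ne_nil _ _) ≠ i}

/-- `X̊(ℓ,i)`, the part of `X̊` spanned by words not starting with `i`. -/
abbrev FPLo (M : I → VS) (i : I) : Type := ⨁ p : AWl I i, (WSp M p.1 : Type)

/-- `X(ℓ,i) = ℂξ ⊕ X̊(ℓ,i)`. -/
abbrev FPL (M : I → VS) (i : I) : Type := ℂ × FPLo M i

/-- `X̊(r,i)`, the part of `X̊` spanned by words not ending with `i`. -/
abbrev FPRo (M : I → VS) (i : I) : Type := ⨁ p : AWr I i, (WSp M p.1 : Type)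

/-- `X(r,i) = ℂξ ⊕ X̊(r,i)`. -/
abbrev FPR (M : I → VS) (i : I) : Type := ℂ × FPRo M i

/-- The single-letter word `i`. -/
def sing (i : I) : AW I := ⟨(i, []), List.isChain_singleton i⟩

/-- Prepend the letter `i` to an alternating word not starting with `i`. -/
def consW (i : I) (p : AW I) (h : p.1.1 ≠ i) : AW I :=
  ⟨(i, p.1.1 :: p.1.2), List.isChain_cons_cons.mpr ⟨Ne.symm h, p.2⟩⟩

/-- Append the letter `i` to an alternating word not ending with `i`. -/
def snocW (p : AW I) (i : I)
    (h : (p.1.1 :: p.1.2).getLast (List.cons_ne_nil _ _) ≠ i) : AW I :=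
  ⟨(p.1.1, p.1.2 ++ [i]), by
    have hp := p.2
    have : (p.1.1 :: (p.1.2 ++ [i])) = (p.1.1 :: p.1.2) ++ [i] := by simp
    rw [this, List.Chain', List.isChain_append]
    refine ⟨hp, List.isChain_singleton i, ?_⟩
    intro x hx y hy
    rw [List.getLast?_eq_some_getLast (List.cons_ne_nil _ _)] at hx
    simp only [List.head?_cons, Option.mem_def, Option.some.injEq] at hx hy
    subst hx; subst hy
    exact h⟩

/-- The canonical identification of `X̊_{i₁} ⊗ ⋯ ⊗ X̊_{iₙ} ⊗ X̊_j` with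
`(X̊_{i₁} ⊗ ⋯ ⊗ X̊_{iₙ}) ⊗ X̊_j` (regrouping the right-nested tensor word). -/
def snocIso (M : I → VS) : ∀ (j : I) (w : List I) (i : I),
    (TW M j (w ++ [i]) : Type) ≃ₗ[ℂ] ((TW M j w : Type) ⊗[ℂ] (M i : Type))
  | j, [], i => LinearEquiv.refl ℂ ((M j : Type) ⊗[ℂ] (M i : Type))
  | j, k :: w, i =>
      (TensorProduct.congr (LinearEquiv.refl ℂ (M j : Type)) (snocIso M k w i)).trans
        (TensorProduct.assoc ℂ (M j : Type) (TW M k w : Type) (M i : Type)).symm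

/-- The projection `P_i` of the reduced free product `X` onto `ℂξ ⊕ X̊_i`, vanishing on all
the other direct summands. -/
def Pproj (M : I → VS) (i : I) : FPr M →ₗ[ℂ] FPr M :=
  (LinearMap.fst ℂ ℂ (FPo M)).prod
    (((DirectSum.lof ℂ (AW I) (fun p => (WSp M p : Type)) (sing i)).comp
        (DirectSum.component ℂ (AW I) (fun p => (WSp M p : Type)) (sing i))).comp
      (LinearMap.snd ℂ ℂ (FPo M)))

section Spaces

variable (X : I → Type) [∀ i, AddCommGroup (X i)] [∀ i, Module ℂ (X i)]
variable (Xo : ∀ i, Submodule ℂ (X i)) (ξ : ∀ i, X i)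

/-- The family of subspaces `X̊_i`, bundled. -/
def Mf : I → VS := fun i => VS.of (Xo i)

/-- `V_i : X_i ⊗ X(ℓ,i) → X` is the *natural* isomorphism: it identifies
`ξ_i ⊗ ξ` with `ξ`, `x̊ ⊗ ξ` with `x̊` (in the summand indexed by the word `i`),
`ξ_i ⊗ (x̊_{i₁} ⊗ ⋯ ⊗ x̊_{iₙ})` with `x̊_{i₁} ⊗ ⋯ ⊗ x̊_{iₙ}` (for `i₁ ≠ i`), and
`x̊ ⊗ (x̊_{i₁} ⊗ ⋯ ⊗ x̊_{iₙ})` with `x̊ ⊗ x̊_{i₁} ⊗ ⋯ ⊗ x̊_{iₙ}`. -/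
def NaturalL (i : I) (V : (X i ⊗[ℂ] FPL (Mf X Xo) i) ≃ₗ[ℂ] FPr (Mf X Xo)) : Prop :=
  (V (ξ i ⊗ₜ[ℂ] ((1, 0) : FPL (Mf X Xo) i)) = xiFP (Mf X Xo)) ∧
  (∀ m : Xo i, V ((m : X i) ⊗ₜ[ℂ] ((1, 0) : FPL (Mf X Xo) i)) =
    (0, DirectSum.of (fun p => (WSp (Mf X Xo) p : Type)) (sing i) m)) ∧
  (∀ (p : AWl I i) (t : WSp (Mf X Xo) p.1),
    V (ξ i ⊗ₜ[ℂ]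
        ((0, DirectSum.of (fun q : AWl I i => (WSp (Mf X Xo) q.1 : Type)) p t) :
          FPL (Mf X Xo) i)) =
      (0, DirectSum.of (fun q => (WSp (Mf X Xo) q : Type)) p.1 t)) ∧
  (∀ (m : Xo i) (p : AWl I i) (t : WSp (Mf X Xo) p.1),
    V ((m : X i) ⊗ₜ[ℂ]
        ((0, DirectSum.of (fun q : AWl I i => (WSp (Mf X Xo) q.1 : Type)) p t) :
          FPL (Mf X Xo) i)) =
      (0, DirectSum.of (fun q => (WSp (Mf X Xo) q : Type)) (consW i p.1 p.2)
            (m ⊗ₜ[ℂ] t)))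

/-- `W_i : X(r,i) ⊗ X_i → X` is the *natural* isomorphism (mirror image of `V_i`). -/
def NaturalR (i : I) (W : (FPR (Mf X Xo) i ⊗[ℂ] X i) ≃ₗ[ℂ] FPr (Mf X Xo)) : Prop :=
  (W (((1, 0) : FPR (Mf X Xo) i) ⊗ₜ[ℂ] ξ i) = xiFP (Mf X Xo)) ∧
  (∀ m : Xo i, W (((1, 0) : FPR (Mf X Xo) i) ⊗ₜ[ℂ] (m : X i)) =
    (0, DirectSum.of (fun p => (WSp (Mf X Xo) p : Type)) (sing i) m)) ∧
  (∀ (p : AWr I i) (t : WSp (Mf X Xo) p.1),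
    W (((0, DirectSum.of (fun q : AWr I i => (WSp (Mf X Xo) q.1 : Type)) p t) :
          FPR (Mf X Xo) i) ⊗ₜ[ℂ] ξ i) =
      (0, DirectSum.of (fun q => (WSp (Mf X Xo) q : Type)) p.1 t)) ∧
  (∀ (p : AWr I i) (t : WSp (Mf X Xo) p.1) (m : Xo i),
    W (((0, DirectSum.of (fun q : AWr I i => (WSp (Mf X Xo) q.1 : Type)) p t) :
          FPR (Mf X Xo) i) ⊗ₜ[ℂ] (m : X i)) =
      (0, DirectSum.of (fun q => (WSp (Mf X Xo) q : Type)) (snocW p.1 i p.2)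
            ((snocIso (Mf X Xo) p.1.1.1 p.1.1.2 i).symm (t ⊗ₜ[ℂ] m))))

/-- The left regular representation `λ_i(T) = V_i (T ⊗ I) V_i⁻¹`. -/
def lam (V : ∀ i, (X i ⊗[ℂ] FPL (Mf X Xo) i) ≃ₗ[ℂ] FPr (Mf X Xo)) (i : I)
    (T : X i →ₗ[ℂ] X i) : FPr (Mf X Xo) →ₗ[ℂ] FPr (Mf X Xo) :=
  (V i).toLinearMap ∘ₗ (TensorProduct.map T LinearMap.id) ∘ₗ (V i).symm.toLinearMap

/-- The right regular representation `ρ_i(T) = W_i (I ⊗ T) W_i⁻¹`. -/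
def rho (W : ∀ i, (FPR (Mf X Xo) i ⊗[ℂ] X i) ≃ₗ[ℂ] FPr (Mf X Xo)) (i : I)
    (T : X i →ₗ[ℂ] X i) : FPr (Mf X Xo) →ₗ[ℂ] FPr (Mf X Xo) :=
  (W i).toLinearMap ∘ₗ (TensorProduct.map LinearMap.id T) ∘ₗ (W i).symm.toLinearMap

/-- The vector state `φ_ξ(T) = φ(Tξ)` associated with the specified vector `ξ` of the
reduced free product (`φ` being the functional with `φ(ξ) = 1`, `ker φ = X̊`). -/
def phiXi (T : FPr (Mf X Xo) →ₗ[ℂ] FPr (Mf X Xo)) : ℂ := (T (xiFP (Mf X Xo))).1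

end Spaces

end FFB

/-!
Take `T₁ = λ_i(a)` and `T₂ = λ_j(b)`. Naturality of `V_i` makes `λ_i(a)` preserve both
`V_i(X_i ⊗ ξ) = ℂξ ⊕ X̊_i = range P_i` and `V_i(X_i ⊗ X̊(ℓ,i)) ⊇ ker P_i`, and `φ` vanishes on
the latter. Hence `φ(P_i λ_i(a) P_i u) = φ(λ_i(a) u)` for every `u`, and
`P_j λ_j(b) P_j ξ = λ_j(b) ξ`. Uniqueness holds because `P_i λ_i(a) P_i` restricted to
`V_i(X_i ⊗ ξ) ≅ X_i` is `a` itself.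
-/

namespace FFB

lemma exists_smul_add_of_isCompl {E : Type} [AddCommGroup E] [Module ℂ E] {ξ₀ : E}
    {p : Submodule ℂ E} (h : IsCompl (ℂ ∙ ξ₀) p) (x : E) :
    ∃ c : ℂ, ∃ m : p, x = c • ξ₀ + m := by
  obtain ⟨y, z, hy, hz, rfl⟩ := Submodule.codisjoint_iff_exists_add_eq.mp h.codisjoint x
  obtain ⟨c, rfl⟩ := Submodule.mem_span_singleton.mp hy
  exact ⟨c, ⟨z, hz⟩, rfl⟩

section Projection

variable {I : Type} [DecidableEq I] (M : I → VS) (i : I)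

lemma Pproj_apply (u : FPr M) :
    Pproj M i u = (u.1, DirectSum.of (fun p => (WSp M p : Type)) (sing i) (u.2 (sing i))) :=
  rfl

lemma Pproj_mk_of_sing (c : ℂ) (t : WSp M (sing i)) :
    Pproj M i (c, DirectSum.of (fun p => (WSp M p : Type)) (sing i) t) =
      (c, DirectSum.of (fun p => (WSp M p : Type)) (sing i) t) := by
  rw [Pproj_apply, DirectSum.of_eq_same]

lemma Pproj_mk_of_ne_sing (c : ℂ) {p : AW I} (hp : p ≠ sing i) (t : WSp M p) :
    Pproj M i (c, DirectSum.of (fun q => (WSp M q : Type)) p t) = (c, 0) := by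
  rw [Pproj_apply, DirectSum.of_eq_of_ne _ _ _ (Ne.symm hp), map_zero]

lemma Pproj_xiFP : Pproj M i (xiFP M) = xiFP M := by
  rw [Pproj_apply, xiFP, DirectSum.zero_apply, map_zero]

end Projection

section Compression

variable {I : Type}
variable (X : I → Type) [∀ i, AddCommGroup (X i)] [∀ i, Module ℂ (X i)]
variable (Xo : ∀ i, Submodule ℂ (X i)) {ξ : ∀ i, X i}
variable (V : ∀ i, (X i ⊗[ℂ] FPL (Mf X Xo) i) ≃ₗ[ℂ] FPr (Mf X Xo)) {i : I}

lemma lam_apply_V (a : X i →ₗ[ℂ] X i) (x : X i) (v : FPL (Mf X Xo) i) :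
    lam X Xo V i a (V i (x ⊗ₜ v)) = V i (a x ⊗ₜ v) := by
  simp [lam]

/-- `V_i(X_i ⊗ X̊(ℓ,i))`; for natural `V_i` it is the kernel of `P_i`. -/
def tailSubmodule (i : I) : Submodule ℂ (FPr (Mf X Xo)) :=
  LinearMap.range ((V i).toLinearMap ∘ₗ (LinearMap.inr ℂ ℂ (FPLo (Mf X Xo) i)).lTensor (X i))

lemma V_tmul_mem_tailSubmodule (x : X i) (w : FPLo (Mf X Xo) i) :
    V i (x ⊗ₜ ((0, w) : FPL (Mf X Xo) i)) ∈ tailSubmodule X Xo V i :=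
  ⟨x ⊗ₜ w, rfl⟩

lemma lam_mem_tailSubmodule (a : X i →ₗ[ℂ] X i) {u : FPr (Mf X Xo)}
    (hu : u ∈ tailSubmodule X Xo V i) : lam X Xo V i a u ∈ tailSubmodule X Xo V i := by
  obtain ⟨s, rfl⟩ := hu
  refine ⟨a.rTensor _ s, ?_⟩
  simp [lam, ← LinearMap.comp_apply (LinearMap.lTensor _ _), LinearMap.lTensor_comp_rTensor]

variable [DecidableEq I]

lemma fst_V_tmul_eq_zero (hVi : NaturalL X Xo ξ i (V i)) (hci : IsCompl (ℂ ∙ ξ i) (Xo i))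
    (x : X i) (w : FPLo (Mf X Xo) i) : (V i (x ⊗ₜ ((0, w) : FPL (Mf X Xo) i))).1 = 0 := by
  obtain ⟨c, m, rfl⟩ := exists_smul_add_of_isCompl hci x
  induction w using DirectSum.induction_on with
  | zero => rw [Prod.mk_zero_zero, TensorProduct.tmul_zero, map_zero]; rfl
  | of p t =>
    rw [TensorProduct.add_tmul, ← TensorProduct.smul_tmul', map_add, map_smul,
      hVi.2.2.1 p t, hVi.2.2.2 m p t]
    simp
  | add w₁ w₂ ih₁ ih₂ =>
    rw [← add_zero (0 : ℂ), ← Prod.mk_add_mk, TensorProduct.tmul_add, map_add, Prod.fst_add,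
      ih₁, ih₂, add_zero]

lemma fst_eq_zero_of_mem_tailSubmodule (hVi : NaturalL X Xo ξ i (V i))
    (hci : IsCompl (ℂ ∙ ξ i) (Xo i)) {u : FPr (Mf X Xo)} (hu : u ∈ tailSubmodule X Xo V i) :
    u.1 = 0 := by
  obtain ⟨s, rfl⟩ := hu
  induction s using TensorProduct.induction_on with
  | zero => simp
  | tmul x w => exact fst_V_tmul_eq_zero X Xo V hVi hci x w
  | add s₁ s₂ ih₁ ih₂ => rw [map_add, Prod.fst_add, ih₁, ih₂, add_zero]

lemma mem_tailSubmodule_of_ne_sing (hVi : NaturalL X Xo ξ i (V i)) {p : AW I} (hp : p ≠ sing i)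
    (t : WSp (Mf X Xo) p) :
    ((0, DirectSum.of (fun q => (WSp (Mf X Xo) q : Type)) p t) : FPr (Mf X Xo)) ∈
      tailSubmodule X Xo V i := by
  obtain ⟨⟨k, w⟩, ch⟩ := p
  by_cases hk : k = i
  · subst hk
    cases w with
    | nil => exact absurd rfl hp
    | cons k' w =>
      obtain ⟨hne, ch'⟩ := List.isChain_cons_cons.mp ch
      let q : AWl I k := ⟨⟨(k', w), ch'⟩, Ne.symm hne⟩
      change t ∈ (tailSubmodule X Xo V k).comap
        (LinearMap.inr ℂ ℂ _ ∘ₗ DirectSum.lof ℂ _ (fun q => (WSp (Mf X Xo) q : Type)) _)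
      induction t using TensorProduct.induction_on with
      | zero => exact zero_mem _
      | tmul m s =>
        show ((0, DirectSum.of _ (consW k q.1 q.2) (m ⊗ₜ s)) : FPr (Mf X Xo)) ∈
          tailSubmodule X Xo V k
        exact hVi.2.2.2 m q s ▸ V_tmul_mem_tailSubmodule X Xo V _ _
      | add t₁ t₂ h₁ h₂ => exact add_mem h₁ h₂
  · exact hVi.2.2.1 ⟨⟨(k, w), ch⟩, hk⟩ t ▸ V_tmul_mem_tailSubmodule X Xo V _ _

lemma sub_Pproj_mem_tailSubmodule (hVi : NaturalL X Xo ξ i (V i)) (u : FPr (Mf X Xo)) :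
    u - Pproj (Mf X Xo) i u ∈ tailSubmodule X Xo V i := by
  have hker : ∀ w, ((0, w) : FPr (Mf X Xo)) ∈
      (tailSubmodule X Xo V i).comap (LinearMap.id - Pproj (Mf X Xo) i) := by
    intro w
    induction w using DirectSum.induction_on with
    | zero => rw [show ((0, 0) : FPr (Mf X Xo)) = 0 from rfl]; exact zero_mem _
    | of p t =>
      by_cases hp : p = sing i
      · subst hp
        simp [Pproj_mk_of_sing]
      · simpa [Pproj_mk_of_ne_sing _ _ _ hp] using mem_tailSubmodule_of_ne_sing X Xo V hVi hp t
    | add w₁ w₂ h₁ h₂ => simpa using add_mem h₁ h₂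
  obtain ⟨c, w⟩ := u
  convert Submodule.mem_comap.mp (hker w) using 1
  ext <;> simp [Pproj_apply]

lemma Pproj_V_tmul_one (hVi : NaturalL X Xo ξ i (V i)) (hci : IsCompl (ℂ ∙ ξ i) (Xo i))
    (y : X i) :
    Pproj (Mf X Xo) i (V i (y ⊗ₜ ((1, 0) : FPL (Mf X Xo) i))) =
      V i (y ⊗ₜ ((1, 0) : FPL (Mf X Xo) i)) := by
  obtain ⟨c, m, rfl⟩ := exists_smul_add_of_isCompl hci y
  rw [TensorProduct.add_tmul, ← TensorProduct.smul_tmul', map_add, map_smul, hVi.1, hVi.2.1 m,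
    map_add, map_smul, Pproj_xiFP]
  exact congrArg (c • xiFP (Mf X Xo) + ·) (Pproj_mk_of_sing (Mf X Xo) i 0 m)

lemma Pproj_lam_xiFP (hVi : NaturalL X Xo ξ i (V i)) (hci : IsCompl (ℂ ∙ ξ i) (Xo i))
    (a : X i →ₗ[ℂ] X i) :
    Pproj (Mf X Xo) i (lam X Xo V i a (xiFP (Mf X Xo))) = lam X Xo V i a (xiFP (Mf X Xo)) := by
  rw [← hVi.1, lam_apply_V, Pproj_V_tmul_one X Xo V hVi hci]

def lamCompress (i : I) (a : X i →ₗ[ℂ] X i) : FPr (Mf X Xo) →ₗ[ℂ] FPr (Mf X Xo) :=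
  Pproj (Mf X Xo) i ∘ₗ lam X Xo V i a ∘ₗ Pproj (Mf X Xo) i

/-- `u - P_i u` lies in `V_i(X_i ⊗ X̊(ℓ,i))`, which `λ_i(a)` preserves and on which the
`ξ`-coordinate vanishes. -/
lemma fst_lamCompress (hVi : NaturalL X Xo ξ i (V i)) (hci : IsCompl (ℂ ∙ ξ i) (Xo i))
    (a : X i →ₗ[ℂ] X i) (u : FPr (Mf X Xo)) :
    (lamCompress X Xo V i a u).1 = (lam X Xo V i a u).1 := by
  have h := fst_eq_zero_of_mem_tailSubmodule X Xo V hVi hci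
    (lam_mem_tailSubmodule X Xo V a (sub_Pproj_mem_tailSubmodule X Xo V hVi u))
  rw [map_sub, Prod.fst_sub, sub_eq_zero] at h
  exact h.symm

lemma lamCompress_xiFP (hVi : NaturalL X Xo ξ i (V i)) (hci : IsCompl (ℂ ∙ ξ i) (Xo i))
    (a : X i →ₗ[ℂ] X i) :
    lamCompress X Xo V i a (xiFP (Mf X Xo)) = lam X Xo V i a (xiFP (Mf X Xo)) := by
  rw [lamCompress, LinearMap.comp_apply, LinearMap.comp_apply, Pproj_xiFP,
    Pproj_lam_xiFP X Xo V hVi hci]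

lemma lamCompress_V_tmul_one (hVi : NaturalL X Xo ξ i (V i)) (hci : IsCompl (ℂ ∙ ξ i) (Xo i))
    (a : X i →ₗ[ℂ] X i) (x : X i) :
    lamCompress X Xo V i a (V i (x ⊗ₜ ((1, 0) : FPL (Mf X Xo) i))) =
      V i (a x ⊗ₜ ((1, 0) : FPL (Mf X Xo) i)) := by
  rw [lamCompress, LinearMap.comp_apply, LinearMap.comp_apply, Pproj_V_tmul_one X Xo V hVi hci,
    lam_apply_V, Pproj_V_tmul_one X Xo V hVi hci]

lemma lamCompress_injective (hVi : NaturalL X Xo ξ i (V i)) (hci : IsCompl (ℂ ∙ ξ i) (Xo i)) :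
    Function.Injective (lamCompress X Xo V i) := by
  intro a a' h
  ext x
  have hx := LinearMap.congr_fun h (V i (x ⊗ₜ ((1, 0) : FPL (Mf X Xo) i)))
  rw [lamCompress_V_tmul_one X Xo V hVi hci, lamCompress_V_tmul_one X Xo V hVi hci] at hx
  let evalξ : (X i ⊗[ℂ] FPL (Mf X Xo) i) →ₗ[ℂ] X i :=
    (TensorProduct.rid ℂ (X i)).toLinearMap ∘ₗ (LinearMap.fst ℂ ℂ _).lTensor (X i)
  simpa [evalξ] using congrArg evalξ ((V i).injective hx)

lemma phiXi_lamCompress_comp {j : I} (hVi : NaturalL X Xo ξ i (V i))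
    (hci : IsCompl (ℂ ∙ ξ i) (Xo i)) (hVj : NaturalL X Xo ξ j (V j))
    (hcj : IsCompl (ℂ ∙ ξ j) (Xo j)) (a : X i →ₗ[ℂ] X i) (b : X j →ₗ[ℂ] X j)
    (z : FPr (Mf X Xo) →ₗ[ℂ] FPr (Mf X Xo)) :
    phiXi X Xo (lamCompress X Xo V i a ∘ₗ z ∘ₗ lamCompress X Xo V j b) =
      phiXi X Xo (lam X Xo V i a ∘ₗ z ∘ₗ lam X Xo V j b) := by
  simp only [phiXi, LinearMap.comp_apply, lamCompress_xiFP X Xo V hVj hcj,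
    fst_lamCompress X Xo V hVi hci]

end Compression

theorem central_face_replacement_general {I : Type} [DecidableEq I]
    (X : I → Type) [∀ i, AddCommGroup (X i)] [∀ i, Module ℂ (X i)]
    (Xo : ∀ i, Submodule ℂ (X i)) (ξ : ∀ i, X i)
    (hcompl : ∀ i, IsCompl (ℂ ∙ ξ i) (Xo i))
    (V : ∀ i, (X i ⊗[ℂ] FPL (Mf X Xo) i) ≃ₗ[ℂ] FPr (Mf X Xo))
    (hV : ∀ i, NaturalL X Xo ξ i (V i))
    (i j : I) (z₁ z₂ : FPr (Mf X Xo) →ₗ[ℂ] FPr (Mf X Xo))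
    (hz₁ : ∃ a : X i →ₗ[ℂ] X i,
      z₁ = Pproj (Mf X Xo) i ∘ₗ lam X Xo V i a ∘ₗ Pproj (Mf X Xo) i)
    (hz₂ : ∃ a : X j →ₗ[ℂ] X j,
      z₂ = Pproj (Mf X Xo) j ∘ₗ lam X Xo V j a ∘ₗ Pproj (Mf X Xo) j) :
    ∃ T₁ T₂ : FPr (Mf X Xo) →ₗ[ℂ] FPr (Mf X Xo),
      (∃ a : X i →ₗ[ℂ] X i, T₁ = lam X Xo V i a) ∧
      (∃ a : X j →ₗ[ℂ] X j, T₂ = lam X Xo V j a) ∧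
      (∀ z : FPr (Mf X Xo) →ₗ[ℂ] FPr (Mf X Xo),
        phiXi X Xo (z₁ ∘ₗ z ∘ₗ z₂) = phiXi X Xo (T₁ ∘ₗ z ∘ₗ T₂)) ∧
      z₁ = Pproj (Mf X Xo) i ∘ₗ T₁ ∘ₗ Pproj (Mf X Xo) i ∧
      z₂ = Pproj (Mf X Xo) j ∘ₗ T₂ ∘ₗ Pproj (Mf X Xo) j ∧
      (∀ T₁' : FPr (Mf X Xo) →ₗ[ℂ] FPr (Mf X Xo),
        (∃ a : X i →ₗ[ℂ] X i, T₁' = lam X Xo V i a) →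
        z₁ = Pproj (Mf X Xo) i ∘ₗ T₁' ∘ₗ Pproj (Mf X Xo) i → T₁' = T₁) ∧
      (∀ T₂' : FPr (Mf X Xo) →ₗ[ℂ] FPr (Mf X Xo),
        (∃ a : X j →ₗ[ℂ] X j, T₂' = lam X Xo V j a) →
        z₂ = Pproj (Mf X Xo) j ∘ₗ T₂' ∘ₗ Pproj (Mf X Xo) j → T₂' = T₂) := by
  obtain ⟨a, rfl⟩ := hz₁
  obtain ⟨b, rfl⟩ := hz₂
  refine ⟨lam X Xo V i a, lam X Xo V j b, ⟨a, rfl⟩, ⟨b, rfl⟩,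
    phiXi_lamCompress_comp X Xo V (hV i) (hcompl i) (hV j) (hcompl j) a b, rfl, rfl, ?_, ?_⟩
  · rintro _ ⟨a', rfl⟩ h
    rw [lamCompress_injective X Xo V (hV i) (hcompl i) h]
  · rintro _ ⟨b', rfl⟩ h
    rw [lamCompress_injective X Xo V (hV j) (hcompl j) h]

/-- Let `(X, X̊, ξ)` be the reduced free product of the family
`(X_i, X̊_i, ξ_i)_{i∈I}` and `φ_ξ` the associated functional on `L(X)`.  Set
`A_{i,ℓ} = λ_i(L(X_i))` and `A_{i,c} = P_i λ_i(L(X_i)) P_i`.  If `z₁ ∈ A_{i,c}` and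
`z₂ ∈ A_{j,c}`, then there exist `T₁ ∈ A_{i,ℓ}` and `T₂ ∈ A_{j,ℓ}` with
`φ_ξ(z₁ z z₂) = φ_ξ(T₁ z T₂)` for all `z ∈ L(X)`; moreover `T₁` and `T₂` are uniquely
determined by `z₁` and `z₂` respectively (via `z₁ = P_i T₁ P_i`, `z₂ = P_j T₂ P_j`). -/
theorem central_face_replacement {I : Type} [DecidableEq I]
    (X : I → Type) [∀ i, AddCommGroup (X i)] [∀ i, Module ℂ (X i)]
    (Xo : ∀ i, Submodule ℂ (X i)) (ξ : ∀ i, X i)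
    (hcompl : ∀ i, IsCompl (ℂ ∙ ξ i) (Xo i)) (hξ : ∀ i, ξ i ∉ Xo i)
    (V : ∀ i, (X i ⊗[ℂ] FPL (Mf X Xo) i) ≃ₗ[ℂ] FPr (Mf X Xo))
    (hV : ∀ i, NaturalL X Xo ξ i (V i))
    (i j : I) (z₁ z₂ : FPr (Mf X Xo) →ₗ[ℂ] FPr (Mf X Xo))
    (hz₁ : ∃ a : X i →ₗ[ℂ] X i,
      z₁ = Pproj (Mf X Xo) i ∘ₗ lam X Xo V i a ∘ₗ Pproj (Mf X Xo) i)
    (hz₂ : ∃ a : X j →ₗ[ℂ] X j,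
      z₂ = Pproj (Mf X Xo) j ∘ₗ lam X Xo V j a ∘ₗ Pproj (Mf X Xo) j) :
    ∃ T₁ T₂ : FPr (Mf X Xo) →ₗ[ℂ] FPr (Mf X Xo),
      (∃ a : X i →ₗ[ℂ] X i, T₁ = lam X Xo V i a) ∧
      (∃ a : X j →ₗ[ℂ] X j, T₂ = lam X Xo V j a) ∧
      (∀ z : FPr (Mf X Xo) →ₗ[ℂ] FPr (Mf X Xo),
        phiXi X Xo (z₁ ∘ₗ z ∘ₗ z₂) = phiXi X Xo (T₁ ∘ₗ z ∘ₗ T₂)) ∧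
      z₁ = Pproj (Mf X Xo) i ∘ₗ T₁ ∘ₗ Pproj (Mf X Xo) i ∧
      z₂ = Pproj (Mf X Xo) j ∘ₗ T₂ ∘ₗ Pproj (Mf X Xo) j ∧
      (∀ T₁' : FPr (Mf X Xo) →ₗ[ℂ] FPr (Mf X Xo),
        (∃ a : X i →ₗ[ℂ] X i, T₁' = lam X Xo V i a) →
        z₁ = Pproj (Mf X Xo) i ∘ₗ T₁' ∘ₗ Pproj (Mf X Xo) i → T₁' = T₁) ∧
      (∀ T₂' : FPr (Mf X Xo) →ₗ[ℂ] FPr (Mf X Xo),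
        (∃ a : X j →ₗ[ℂ] X j, T₂' = lam X Xo V j a) →
        z₂ = Pproj (Mf X Xo) j ∘ₗ T₂' ∘ₗ Pproj (Mf X Xo) j → T₂' = T₂) :=
  central_face_replacement_general X Xo ξ hcompl V hV i j z₁ z₂ hz₁ hz₂

end FFB
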